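/- Let m₊ > 0, s₊ > 0, m₋ < 0, s₋ > 0, and for p > 0 define m₊(p) = (−p²·m₊ + p·√((p²+4)·m₊² + 4·s₊²))/2, m₋(p) = (−p²·m₋ − p·√((p²+4)·m₋² + 4·s₋²))/2, σ±(p) = |m±(p)|/p, and g±ᵖ = φ_{m±(p),σ±(p)}. Let π₊, π₋ > 0 and c₊, c₋ > 0 be fixed positive reals. Then: (i) for every x with 0 < x ≤ 2·(m₊ + s₊²/m₊) there exists p₀ such that for all p ≥ p₀, π₊·c₊·g₊ᵖ(x) > π₋·c₋·g₋ᵖ(x); and (ii) for every x with −2·(|m₋| + s₋²/|m₋|) ≤ x < 0 there exists p₀ such that for all p ≥ p₀, π₋·c₋·g₋ᵖ(x) > π₊·c₊·g₊ᵖ(x). That is, within a margin of width C around the boundary {0}, the cluster assignment sign(π₊c₊g₊ᵖ(x) − π₋c₋g₋ᵖ(x)) converges to sign(x) as p → ∞. -/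

import Mathlib

open Filter Real Topology


/-- Univariate Gaussian density. -/
noncomputable def gaussPdf (m σ t : ℝ) : ℝ :=
  (1 / (σ * Real.sqrt (2 * Real.pi))) * Real.exp (-((t - m) ^ 2) / (2 * σ ^ 2))

noncomputable def fAux (a s p : ℝ) : ℝ :=
  (-(p ^ 2) * a + p * Real.sqrt ((p ^ 2 + 4) * a ^ 2 + 4 * s ^ 2)) / 2

lemma fAux_pos {a s p : ℝ} (ha : 0 < a) (hp : 0 < p) : 0 < fAux a s p := by
  have h2 : p * a < Real.sqrt ((p ^ 2 + 4) * a ^ 2 + 4 * s ^ 2) := by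
    have : Real.sqrt ((p*a)^2) < Real.sqrt ((p ^ 2 + 4) * a ^ 2 + 4 * s ^ 2) := by
      apply Real.sqrt_lt_sqrt (by positivity)
      nlinarith [sq_nonneg s, sq_nonneg a, ha, hp]
    rwa [Real.sqrt_sq (by positivity)] at this
  have h1 : p ^ 2 * a < p * Real.sqrt ((p ^ 2 + 4) * a ^ 2 + 4 * s ^ 2) := by
    nlinarith [h2, hp]
  unfold fAux
  linarith

lemma fAux_tendsto {a s : ℝ} (ha : 0 < a) (hs : 0 < s) :
    Tendsto (fAux a s) atTop (𝓝 (a + s ^ 2 / a)) := by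
  have heq : ∀ᶠ p in atTop, fAux a s p
      = 2 * (a ^ 2 + s ^ 2) / (Real.sqrt (a ^ 2 + (4 * a ^ 2 + 4 * s ^ 2) / p ^ 2) + a) := by
    filter_upwards [eventually_gt_atTop (0:ℝ)] with p hp
    have hX : (0:ℝ) ≤ a ^ 2 + (4 * a ^ 2 + 4 * s ^ 2) / p ^ 2 := by positivity
    set u := Real.sqrt (a ^ 2 + (4 * a ^ 2 + 4 * s ^ 2) / p ^ 2) with hu
    have hu2 : u ^ 2 = a ^ 2 + (4 * a ^ 2 + 4 * s ^ 2) / p ^ 2 := Real.sq_sqrt hX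
    have hu0 : 0 ≤ u := Real.sqrt_nonneg _
    have hua : 0 < u + a := by linarith
    have hS : (p ^ 2 + 4) * a ^ 2 + 4 * s ^ 2
        = p ^ 2 * (a ^ 2 + (4 * a ^ 2 + 4 * s ^ 2) / p ^ 2) := by
      field_simp
      ring
    have hp2 : p ^ 2 ≠ 0 := by positivity
    have hu2' : p ^ 2 * u ^ 2 = p ^ 2 * a ^ 2 + 4 * a ^ 2 + 4 * s ^ 2 := by
      rw [hu2]; field_simp; ring
    unfold fAux
    rw [hS, Real.sqrt_mul (by positivity), Real.sqrt_sq hp.le, ← hu, eq_div_iff hua.ne']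
    linear_combination hu2' / 2
  have h0 : Tendsto (fun p : ℝ => (4 * a ^ 2 + 4 * s ^ 2) / p ^ 2) atTop (𝓝 0) :=
    tendsto_const_nhds.div_atTop (tendsto_pow_atTop two_ne_zero)
  have h1 : Tendsto (fun p : ℝ => a ^ 2 + (4 * a ^ 2 + 4 * s ^ 2) / p ^ 2) atTop (𝓝 (a ^ 2)) := by
    simpa using tendsto_const_nhds.add h0
  have h2 : Tendsto (fun p : ℝ => Real.sqrt (a ^ 2 + (4 * a ^ 2 + 4 * s ^ 2) / p ^ 2))
      atTop (𝓝 a) := by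
    have := (Real.continuous_sqrt.tendsto (a ^ 2)).comp h1
    rwa [Real.sqrt_sq ha.le] at this
  have h3 : Tendsto (fun p : ℝ =>
      2 * (a ^ 2 + s ^ 2) / (Real.sqrt (a ^ 2 + (4 * a ^ 2 + 4 * s ^ 2) / p ^ 2) + a))
      atTop (𝓝 (2 * (a ^ 2 + s ^ 2) / (a + a))) :=
    tendsto_const_nhds.div (h2.add tendsto_const_nhds) (by positivity)
  have hlim : 2 * (a ^ 2 + s ^ 2) / (a + a) = a + s ^ 2 / a := by
    field_simp; ring
  rw [hlim] at h3
  exact Filter.Tendsto.congr' (Filter.EventuallyEq.symm heq) h3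

lemma algebra_step {K L F G p w E1 E2 R : ℝ} (hF : 0 < F) (hG : 0 < G) (hp : 0 < p)
    (hw : 0 < w) (hE1 : 0 < E1) (hE : R * E1 = E2) (h : L / G < K / F * R) :
    L * (1 / (G / p * w) * E1) < K * (1 / (F / p * w) * E2) := by
  have hq : 0 < E1 * (p / w) := by positivity
  have hmul := mul_lt_mul_of_pos_right h hq
  have e1 : L / G * (E1 * (p / w)) = L * (1 / (G / p * w) * E1) := by
    field_simp
  have e2 : K / F * R * (E1 * (p / w)) = K * (1 / (F / p * w) * E2) := by
    rw [← hE]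
    field_simp
  rw [e1, e2] at hmul
  exact hmul

lemma gauss_step {K L F G p x : ℝ} (hF : 0 < F) (hG : 0 < G) (hp : 0 < p)
    (h : L / G < K / F *
      Real.exp (p ^ 2 * ((x + G) ^ 2 / (2 * G ^ 2) - (x - F) ^ 2 / (2 * F ^ 2)))) :
    L * gaussPdf (-G) (G / p) x < K * gaussPdf F (F / p) x := by
  have hsq : 0 < Real.sqrt (2 * Real.pi) := Real.sqrt_pos.mpr (by positivity)
  have eG : -((x - -G) ^ 2) / (2 * (G / p) ^ 2)
      = -(p ^ 2 * (x + G) ^ 2 / (2 * G ^ 2)) := by field_simp; ring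
  have eF : -((x - F) ^ 2) / (2 * (F / p) ^ 2)
      = -(p ^ 2 * (x - F) ^ 2 / (2 * F ^ 2)) := by field_simp
  have hexp : p ^ 2 * ((x + G) ^ 2 / (2 * G ^ 2) - (x - F) ^ 2 / (2 * F ^ 2))
      = p ^ 2 * (x + G) ^ 2 / (2 * G ^ 2) - p ^ 2 * (x - F) ^ 2 / (2 * F ^ 2) := by ring
  rw [hexp] at h
  have hE : Real.exp (p ^ 2 * (x + G) ^ 2 / (2 * G ^ 2) - p ^ 2 * (x - F) ^ 2 / (2 * F ^ 2))
        * Real.exp (-(p ^ 2 * (x + G) ^ 2 / (2 * G ^ 2)))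
      = Real.exp (-(p ^ 2 * (x - F) ^ 2 / (2 * F ^ 2))) := by
    rw [← Real.exp_add]; ring_nf
  unfold gaussPdf
  rw [eG, eF]
  exact algebra_step hF hG hp hsq (Real.exp_pos _) hE h

lemma key_lemma {a s b t K L x : ℝ} (ha : 0 < a) (hs : 0 < s) (hb : 0 < b) (ht : 0 < t)
    (hK : 0 < K) (hL : 0 < L) (hx0 : 0 < x) (hx1 : x ≤ 2 * (a + s ^ 2 / a)) :
    ∀ᶠ p in atTop, L * gaussPdf (-(fAux b t p)) (|fAux b t p| / p) x
      < K * gaussPdf (fAux a s p) (|fAux a s p| / p) x := by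
  set Ma := a + s ^ 2 / a with hMa
  set Mb := b + t ^ 2 / b with hMb
  have hMa0 : 0 < Ma := by rw [hMa]; positivity
  have hMb0 : 0 < Mb := by rw [hMb]; positivity
  have hFt : Tendsto (fAux a s) atTop (𝓝 Ma) := by rw [hMa]; exact fAux_tendsto ha hs
  have hGt : Tendsto (fAux b t) atTop (𝓝 Mb) := by rw [hMb]; exact fAux_tendsto hb ht
  clear_value Ma Mb
  set βp := (x - Ma) ^ 2 / (2 * Ma ^ 2) with hβp
  set βm := (x + Mb) ^ 2 / (2 * Mb ^ 2) with hβm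
  clear_value βp βm
  have hβ : 0 < βm - βp := by
    have h1 : (x - Ma) ^ 2 ≤ Ma ^ 2 := by nlinarith
    have h2 : Mb ^ 2 < (x + Mb) ^ 2 := by nlinarith
    rw [hβp, hβm, sub_pos, div_lt_div_iff₀ (by positivity) (by positivity)]
    nlinarith [mul_lt_mul_of_pos_right h2 (show (0:ℝ) < 2 * Ma ^ 2 by positivity),
      mul_le_mul_of_nonneg_right h1 (show (0:ℝ) ≤ 2 * Mb ^ 2 by positivity)]
  have hDiff : Tendsto (fun p => (x + fAux b t p) ^ 2 / (2 * (fAux b t p) ^ 2)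
      - (x - fAux a s p) ^ 2 / (2 * (fAux a s p) ^ 2)) atTop (𝓝 (βm - βp)) := by
    rw [hβm, hβp]
    apply Tendsto.sub
    · exact (((tendsto_const_nhds.add hGt).pow 2).div
        ((hGt.pow 2).const_mul 2) (mul_pos two_pos (pow_pos hMb0 2)).ne')
    · exact (((tendsto_const_nhds.sub hFt).pow 2).div
        ((hFt.pow 2).const_mul 2) (mul_pos two_pos (pow_pos hMa0 2)).ne')
  have hExp : Tendsto (fun p : ℝ => Real.exp (p ^ 2 *
      ((x + fAux b t p) ^ 2 / (2 * (fAux b t p) ^ 2)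
        - (x - fAux a s p) ^ 2 / (2 * (fAux a s p) ^ 2)))) atTop atTop :=
    Real.tendsto_exp_atTop.comp
      (Filter.Tendsto.atTop_mul_pos hβ (tendsto_pow_atTop two_ne_zero) hDiff)
  have hR : Tendsto (fun p : ℝ => K / fAux a s p * Real.exp (p ^ 2 *
      ((x + fAux b t p) ^ 2 / (2 * (fAux b t p) ^ 2)
        - (x - fAux a s p) ^ 2 / (2 * (fAux a s p) ^ 2)))) atTop atTop :=
    Filter.Tendsto.pos_mul_atTop (div_pos hK hMa0)
      (tendsto_const_nhds.div hFt hMa0.ne') hExp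
  have hLt : Tendsto (fun p : ℝ => L / fAux b t p) atTop (𝓝 (L / Mb)) :=
    tendsto_const_nhds.div hGt hMb0.ne'
  have e1 : ∀ᶠ p in atTop, L / fAux b t p < L / Mb + 1 :=
    hLt.eventually_lt_const (by linarith)
  have e2 := hR.eventually_gt_atTop (L / Mb + 1)
  filter_upwards [e1, e2, eventually_gt_atTop (0:ℝ)] with p h1 h2 hp
  have hFp : 0 < fAux a s p := fAux_pos ha hp
  have hGp : 0 < fAux b t p := fAux_pos hb hp
  rw [abs_of_pos hFp, abs_of_pos hGp]
  exact gauss_step hFp hGp hp (lt_trans h1 h2)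

lemma gaussPdf_reflect (m σ t : ℝ) : gaussPdf m σ t = gaussPdf (-m) σ (-t) := by
  unfold gaussPdf
  have h : (t - m) ^ 2 = (-t - -m) ^ 2 := by ring
  rw [h]

/-- Within a margin around the boundary `{0}`, the weighted cluster assignment
`sign(π₊ c₊ g₊ᵖ(x) − π₋ c₋ g₋ᵖ(x))` converges to `sign(x)` as `p → ∞`:
(i) points on the positive side within the margin are eventually assigned to
the positive cluster, and (ii) points on the negative side within the margin
are eventually assigned to the negative cluster. -/
theorem c3l_classification_converges
    (mPlus sPlus mMinus sMinus : ℝ)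
    (hmPlus : 0 < mPlus) (hsPlus : 0 < sPlus)
    (hmMinus : mMinus < 0) (hsMinus : 0 < sMinus)
    (mp mm σp σm : ℝ → ℝ)
    (hmp : ∀ p, mp p =
      (-(p ^ 2) * mPlus + p * Real.sqrt ((p ^ 2 + 4) * mPlus ^ 2 + 4 * sPlus ^ 2)) / 2)
    (hmm : ∀ p, mm p =
      (-(p ^ 2) * mMinus - p * Real.sqrt ((p ^ 2 + 4) * mMinus ^ 2 + 4 * sMinus ^ 2)) / 2)
    (hσp : ∀ p, σp p = |mp p| / p) (hσm : ∀ p, σm p = |mm p| / p)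
    (πPlus πMinus cPlus cMinus : ℝ)
    (hπPlus : 0 < πPlus) (hπMinus : 0 < πMinus) (hcPlus : 0 < cPlus) (hcMinus : 0 < cMinus) :
    (∀ x : ℝ, 0 < x → x ≤ 2 * (mPlus + sPlus ^ 2 / mPlus) →
        ∃ p₀ : ℝ, ∀ p : ℝ, p₀ ≤ p →
          πMinus * cMinus * gaussPdf (mm p) (σm p) x <
            πPlus * cPlus * gaussPdf (mp p) (σp p) x) ∧
      (∀ x : ℝ, -(2 * (|mMinus| + sMinus ^ 2 / |mMinus|)) ≤ x → x < 0 →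
        ∃ p₀ : ℝ, ∀ p : ℝ, p₀ ≤ p →
          πPlus * cPlus * gaussPdf (mp p) (σp p) x <
            πMinus * cMinus * gaussPdf (mm p) (σm p) x) := by
  have hb : (0:ℝ) < -mMinus := by linarith
  have e1 : ∀ p, mp p = fAux mPlus sPlus p := fun p => hmp p
  have e2 : ∀ p, mm p = -(fAux (-mMinus) sMinus p) := by
    intro p
    rw [hmm p]
    unfold fAux
    ring_nf
  have e3 : ∀ p, σp p = |fAux mPlus sPlus p| / p := fun p => by rw [hσp p, e1 p]
  have e4 : ∀ p, σm p = |fAux (-mMinus) sMinus p| / p := fun p => by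
    rw [hσm p, e2 p, abs_neg]
  constructor
  · intro x hx0 hx1
    have hk := key_lemma (K := πPlus * cPlus) (L := πMinus * cMinus)
      hmPlus hsPlus hb hsMinus (by positivity) (by positivity) hx0 hx1
    obtain ⟨p₀, hp⟩ := eventually_atTop.mp hk
    refine ⟨p₀, fun p hpp => ?_⟩
    rw [e1 p, e2 p, e3 p, e4 p]
    exact hp p hpp
  · intro x hx0 hx1
    have habs : |mMinus| = -mMinus := abs_of_neg hmMinus
    have hy0 : 0 < -x := by linarith
    have hy1 : -x ≤ 2 * (-mMinus + sMinus ^ 2 / -mMinus) := by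
      rw [habs] at hx0; linarith
    have hk := key_lemma (K := πMinus * cMinus) (L := πPlus * cPlus)
      hb hsMinus hmPlus hsPlus (by positivity) (by positivity) hy0 hy1
    obtain ⟨p₀, hp⟩ := eventually_atTop.mp hk
    refine ⟨p₀, fun p hpp => ?_⟩
    have r1 : gaussPdf (mp p) (σp p) x
        = gaussPdf (-(fAux mPlus sPlus p)) (|fAux mPlus sPlus p| / p) (-x) := by
      rw [gaussPdf_reflect, e1 p, e3 p]
    have r2 : gaussPdf (mm p) (σm p) x
        = gaussPdf (fAux (-mMinus) sMinus p) (|fAux (-mMinus) sMinus p| / p) (-x) := by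
      rw [gaussPdf_reflect, e2 p, neg_neg, e4 p]
    rw [r1, r2]
    exact hp p hpp
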